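/- Let D' ⊆ ℂ^m be a convex domain containing no complex affine line and let k ≥ 1. Then every holomorphic map φ : D' × ℂ^k → ℂ^m with φ(D' × ℂ^k) ⊆ D' is independent of the second variable: φ(z, w) = φ(z, w') for all z ∈ D' and all w, w' ∈ ℂ^k. In particular, every holomorphic self-map f of D' × ℂ^k has the form f(z, w) = (φ(z), ψ(z, w)) where φ : D' → D' is holomorphic. -/

import Mathlib

/-!
If an entire curve `g` lies in an open convex set `D` and `x ∉ D`, a complex functional whose
real part separates `D` from `x` maps `g` into a half-plane, so it is constant along `g` by
Liouville. Hence it kills `g b - g a`, which shows that `D` is invariant under translation by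
`ℂ • (g b - g a)`; without complex lines in `D`, `g` must be constant. Apply this to `φ` restricted
to the complex line through `(z, w)` and `(z, w')`.
-/

/-- A convex domain: a nonempty open convex subset. -/
def IsConvexDomain {m : ℕ} (D : Set (Fin m → ℂ)) : Prop :=
  IsOpen D ∧ Convex ℝ D ∧ D.Nonempty

/-- `S` contains a complex affine line `{p + ζ • v : ζ ∈ ℂ}` with `v ≠ 0`. -/
def ContainsComplexLine {E : Type*} [AddCommGroup E] [Module ℂ E] (S : Set E) : Prop :=
  ∃ p v : E, v ≠ 0 ∧ ∀ ζ : ℂ, p + ζ • v ∈ S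

open Complex Set Bornology

theorem Differentiable.apply_eq_apply_of_re_le {g : ℂ → ℂ} (hg : Differentiable ℂ g) {c : ℝ}
    (hc : ∀ ζ, (g ζ).re ≤ c) (a b : ℂ) : g a = g b := by
  -- `g` omits the half-plane `re > c`, so `1 / (g - (c + 1))` is a bounded entire function.
  have hdist : ∀ ζ, 1 ≤ ‖g ζ - (c + 1)‖ := fun ζ => by
    refine le_trans ?_ (abs_re_le_norm _)
    rw [le_abs]
    right
    simp only [sub_re, add_re, ofReal_re, one_re]
    linarith [hc ζ]
  have hne : ∀ ζ, g ζ - (c + 1) ≠ 0 := fun ζ h => by linarith [hdist ζ, norm_eq_zero.mpr h]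
  have hbdd : IsBounded (range fun ζ => (g ζ - (c + 1))⁻¹) := by
    refine isBounded_iff_forall_norm_le.mpr ⟨1, ?_⟩
    rintro _ ⟨ζ, rfl⟩
    rw [norm_inv]
    exact inv_le_one_of_one_le₀ (hdist ζ)
  simpa using ((hg.sub_const _).inv hne).apply_eq_apply_of_bounded hbdd a b

variable {E : Type*} [NormedAddCommGroup E] [NormedSpace ℂ E]

theorem Differentiable.add_smul_sub_mem_of_convex {D : Set E} (hDo : IsOpen D)
    (hDc : Convex ℝ D) {g : ℂ → E} (hg : Differentiable ℂ g) (hgD : ∀ ζ, g ζ ∈ D) {z : E}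
    (hz : z ∈ D) (a b ζ : ℂ) : z + ζ • (g b - g a) ∈ D := by
  by_contra hx
  obtain ⟨ℓ, hℓ⟩ := RCLike.geometric_hahn_banach_open_point (𝕜 := ℂ) hDc hDo hx
  have hconst : ℓ (g a) = ℓ (g b) :=
    (ℓ.differentiable.comp hg).apply_eq_apply_of_re_le (fun ζ => (hℓ _ (hgD ζ)).le) a b
  have hshift : ℓ (z + ζ • (g b - g a)) = ℓ z := by simp [hconst]
  exact (hℓ z hz).ne (by rw [hshift])

theorem Differentiable.apply_eq_apply_of_convex_of_not_containsComplexLine {D : Set E}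
    (hDo : IsOpen D) (hDc : Convex ℝ D) (hline : ¬ ContainsComplexLine D) {g : ℂ → E}
    (hg : Differentiable ℂ g) (hgD : ∀ ζ, g ζ ∈ D) (a b : ℂ) : g a = g b := by
  by_contra hab
  exact hline ⟨g a, g b - g a, sub_ne_zero.mpr (Ne.symm hab),
    hg.add_smul_sub_mem_of_convex hDo hDc hgD (hgD a) a b⟩

theorem DifferentiableOn.apply_eq_apply_of_mapsTo_prod_univ {X F : Type*}
    [NormedAddCommGroup X] [NormedSpace ℂ X] [NormedAddCommGroup F] [NormedSpace ℂ F]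
    {S : Set X} (hS : IsOpen S) {D : Set E} (hDo : IsOpen D) (hDc : Convex ℝ D)
    (hline : ¬ ContainsComplexLine D) {φ : X × F → E} (hφ : DifferentiableOn ℂ φ (S ×ˢ univ))
    (hφD : MapsTo φ (S ×ˢ univ) D) {z : X} (hz : z ∈ S) (w w' : F) : φ (z, w) = φ (z, w') := by
  have hmem : ∀ ζ : ℂ, (z, w + ζ • (w' - w)) ∈ S ×ˢ (univ : Set F) := fun _ => ⟨hz, trivial⟩
  have hdiff : Differentiable ℂ fun ζ : ℂ => φ (z, w + ζ • (w' - w)) := fun ζ =>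
    (hφ.differentiableAt ((hS.prod isOpen_univ).mem_nhds (hmem ζ))).comp ζ (by fun_prop)
  simpa using hdiff.apply_eq_apply_of_convex_of_not_containsComplexLine hDo hDc hline
    (fun ζ => hφD (hmem ζ)) 0 1

theorem self_maps_of_product_general {m k : ℕ} (D' : Set (Fin m → ℂ)) (hD : IsConvexDomain D')
    (hline : ¬ ContainsComplexLine D') :
    (∀ φ : ((Fin m → ℂ) × (Fin k → ℂ)) → (Fin m → ℂ),
      DifferentiableOn ℂ φ (D' ×ˢ (Set.univ : Set (Fin k → ℂ))) →
      (∀ p ∈ D' ×ˢ (Set.univ : Set (Fin k → ℂ)), φ p ∈ D') →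
      ∀ z ∈ D', ∀ w w' : Fin k → ℂ, φ (z, w) = φ (z, w')) ∧
    (∀ f : ((Fin m → ℂ) × (Fin k → ℂ)) → ((Fin m → ℂ) × (Fin k → ℂ)),
      DifferentiableOn ℂ f (D' ×ˢ (Set.univ : Set (Fin k → ℂ))) →
      Set.MapsTo f (D' ×ˢ (Set.univ : Set (Fin k → ℂ)))
        (D' ×ˢ (Set.univ : Set (Fin k → ℂ))) →
      ∃ (φ : (Fin m → ℂ) → (Fin m → ℂ)) (ψ : ((Fin m → ℂ) × (Fin k → ℂ)) → (Fin k → ℂ)),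
        DifferentiableOn ℂ φ D' ∧ Set.MapsTo φ D' D' ∧
        ∀ z ∈ D', ∀ w : Fin k → ℂ, f (z, w) = (φ z, ψ (z, w))) := by
  obtain ⟨hDo, hDc, -⟩ := hD
  have hindep : ∀ φ : ((Fin m → ℂ) × (Fin k → ℂ)) → (Fin m → ℂ),
      DifferentiableOn ℂ φ (D' ×ˢ (Set.univ : Set (Fin k → ℂ))) →
      (∀ p ∈ D' ×ˢ (Set.univ : Set (Fin k → ℂ)), φ p ∈ D') →
      ∀ z ∈ D', ∀ w w' : Fin k → ℂ, φ (z, w) = φ (z, w') := fun φ hφ hφD z hz w w' =>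
    hφ.apply_eq_apply_of_mapsTo_prod_univ hDo hDo hDc hline hφD hz w w'
  refine ⟨hindep, fun f hf hfD => ⟨fun z => (f (z, 0)).1, fun p => (f p).2, ?_, ?_, ?_⟩⟩
  · exact hf.fst.comp (differentiableOn_id.prodMk (differentiableOn_const 0))
      fun z hz => ⟨hz, trivial⟩
  · exact fun z hz => (hfD ⟨hz, trivial⟩).1
  · exact fun z hz w => Prod.ext (hindep _ hf.fst (fun p hp => (hfD hp).1) z hz w 0) rfl

/-- structural observation in the final remark of the paper: if
`D' ⊆ ℂ^m` is a convex domain containing no complex affine line and `k ≥ 1`, then every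
holomorphic map `φ : D' × ℂ^k → ℂ^m` with image in `D'` does not depend on the second
variable; in particular every holomorphic self-map `f` of `D' × ℂ^k` has the form
`f(z, w) = (φ(z), ψ(z, w))` with `φ : D' → D'` holomorphic. -/
theorem self_maps_of_product {m k : ℕ} (D' : Set (Fin m → ℂ)) (hD : IsConvexDomain D')
    (hline : ¬ ContainsComplexLine D') (hk : 1 ≤ k) :
    (∀ φ : ((Fin m → ℂ) × (Fin k → ℂ)) → (Fin m → ℂ),
      DifferentiableOn ℂ φ (D' ×ˢ (Set.univ : Set (Fin k → ℂ))) →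
      (∀ p ∈ D' ×ˢ (Set.univ : Set (Fin k → ℂ)), φ p ∈ D') →
      ∀ z ∈ D', ∀ w w' : Fin k → ℂ, φ (z, w) = φ (z, w')) ∧
    (∀ f : ((Fin m → ℂ) × (Fin k → ℂ)) → ((Fin m → ℂ) × (Fin k → ℂ)),
      DifferentiableOn ℂ f (D' ×ˢ (Set.univ : Set (Fin k → ℂ))) →
      Set.MapsTo f (D' ×ˢ (Set.univ : Set (Fin k → ℂ)))
        (D' ×ˢ (Set.univ : Set (Fin k → ℂ))) →
      ∃ (φ : (Fin m → ℂ) → (Fin m → ℂ)) (ψ : ((Fin m → ℂ) × (Fin k → ℂ)) → (Fin k → ℂ)),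
        DifferentiableOn ℂ φ D' ∧ Set.MapsTo φ D' D' ∧
        ∀ z ∈ D', ∀ w : Fin k → ℂ, f (z, w) = (φ z, ψ (z, w))) :=
  self_maps_of_product_general D' hD hline
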